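/- The following are equivalent for a family of likelihood ratios Φ_y : 𝒳 → ℝ, y ∈ (0,1), that are jointly continuous in (x,y): (a) for all 0 < y < y' < 1 and all x,x', Φ_y(x) < Φ_y(x') implies Φ_{y'}(x) ≤ Φ_{y'}(x'); (b) there exists s* : 𝒳 → ℝ such that for all y ∈ (0,1), Φ_y(x) < Φ_y(x') implies s*(x) < s*(x'). Moreover, under (a), the function m(x) = ∫₀¹ η_y(x) dy (where η_y is an increasing transform of Φ_y) is such a function s*. -/
import Mathlib


open Set MeasureTheory

/-- For a jointly continuous family of likelihood ratios `Φ_y`, with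
`η_y = 1 − (1−p_y)/(1−p_y + p_y Φ_y)` an increasing transform of `Φ_y`, the
following are equivalent: (a) monotone transitivity of the pointwise orders of the
`Φ_y`; (b) existence of a scoring function `s*` ranking consistently with every `Φ_y`.
Moreover, under (a), `m(x) = ∫₀¹ η_y(x) dy` is such a function. -/
theorem stmt4 {𝓧 : Type*} [TopologicalSpace 𝓧]
    (Φ η : ℝ → 𝓧 → ℝ) (p : ℝ → ℝ) (m : 𝓧 → ℝ)
    (hp : ∀ y ∈ Ioo (0:ℝ) 1, p y ∈ Ioo (0:ℝ) 1)
    (hΦpos : ∀ y ∈ Ioo (0:ℝ) 1, ∀ x : 𝓧, 0 < Φ y x)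
    (hη : ∀ y ∈ Ioo (0:ℝ) 1, ∀ x : 𝓧,
      η y x = 1 - (1 - p y) / (1 - p y + p y * Φ y x))
    (hcont : Continuous fun q : 𝓧 × ℝ => η q.2 q.1)
    (hm : ∀ x : 𝓧, m x = ∫ y in Ioo (0:ℝ) 1, η y x) :
    ((∀ y ∈ Ioo (0:ℝ) 1, ∀ y' ∈ Ioo (0:ℝ) 1, y < y' →
        ∀ x x' : 𝓧, Φ y x < Φ y x' → Φ y' x ≤ Φ y' x') ↔
      (∃ sStar : 𝓧 → ℝ, ∀ y ∈ Ioo (0:ℝ) 1, ∀ x x' : 𝓧,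
        Φ y x < Φ y x' → sStar x < sStar x')) ∧
    ((∀ y ∈ Ioo (0:ℝ) 1, ∀ y' ∈ Ioo (0:ℝ) 1, y < y' →
        ∀ x x' : 𝓧, Φ y x < Φ y x' → Φ y' x ≤ Φ y' x') →
      ∀ y ∈ Ioo (0:ℝ) 1, ∀ x x' : 𝓧, Φ y x < Φ y x' → m x < m x') := by
  have hden : ∀ y ∈ Ioo (0:ℝ) 1, ∀ x, 0 < 1 - p y + p y * Φ y x := by
    intro y hy x
    have hp' := hp y hy
    have hΦ := hΦpos y hy x
    nlinarith [hp'.1, hp'.2]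
  have hηlt : ∀ y ∈ Ioo (0:ℝ) 1, ∀ x x', Φ y x < Φ y x' → η y x < η y x' := by
    intro y hy x x' h
    rw [hη y hy x, hη y hy x']
    have hp' := hp y hy
    have d1 := hden y hy x
    have d2 := hden y hy x'
    have h1 : (1 - p y) / (1 - p y + p y * Φ y x') <
        (1 - p y) / (1 - p y + p y * Φ y x) := by
      apply div_lt_div_of_pos_left (by linarith [hp'.2]) d1
      nlinarith [hp'.1]
    linarith
  have hηle : ∀ y ∈ Ioo (0:ℝ) 1, ∀ x x', Φ y x ≤ Φ y x' → η y x ≤ η y x' := by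
    intro y hy x x' h
    rcases eq_or_lt_of_le h with h | h
    · rw [hη y hy x, hη y hy x', h]
    · exact (hηlt y hy x x' h).le
  have part2 : (∀ y ∈ Ioo (0:ℝ) 1, ∀ y' ∈ Ioo (0:ℝ) 1, y < y' →
        ∀ x x' : 𝓧, Φ y x < Φ y x' → Φ y' x ≤ Φ y' x') →
      ∀ y ∈ Ioo (0:ℝ) 1, ∀ x x' : 𝓧, Φ y x < Φ y x' → m x < m x' := by
    intro ha y0 hy0 x x' hlt
    have hle : ∀ y ∈ Ioo (0:ℝ) 1, η y x ≤ η y x' := by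
      intro y hy
      rcases lt_trichotomy y y0 with h | h | h
      · by_contra hcon
        push_neg at hcon
        have hΦlt : Φ y x' < Φ y x := by
          by_contra h2
          push_neg at h2
          exact absurd (hηle y hy x x' h2) (not_le.mpr hcon)
        have := ha y hy y0 hy0 h x' x hΦlt
        linarith
      · rw [h]; exact (hηlt y0 hy0 x x' hlt).le
      · exact hηle y hy x x' (ha y0 hy0 y hy h x x' hlt)
    have hcx : Continuous fun y => η y x :=
      hcont.comp (continuous_const.prodMk continuous_id)
    have hcx' : Continuous fun y => η y x' :=
      hcont.comp (continuous_const.prodMk continuous_id)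
    have hix : IntegrableOn (fun y => η y x) (Ioo (0:ℝ) 1) volume :=
      (hcx.continuousOn.integrableOn_compact isCompact_Icc).mono_set
        Ioo_subset_Icc_self
    have hix' : IntegrableOn (fun y => η y x') (Ioo (0:ℝ) 1) volume :=
      (hcx'.continuousOn.integrableOn_compact isCompact_Icc).mono_set
        Ioo_subset_Icc_self
    set g : ℝ → ℝ := fun y => η y x' - η y x with hg
    have hgc : Continuous g := hcx'.sub hcx
    have hgi : IntegrableOn g (Ioo (0:ℝ) 1) volume := hix'.sub hix
    have hgnn : 0 ≤ᵐ[volume.restrict (Ioo (0:ℝ) 1)] g := by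
      filter_upwards [ae_restrict_mem measurableSet_Ioo] with y hy
      have := hle y hy
      simp only [hg, Pi.zero_apply]
      linarith
    have hpos : 0 < ∫ y in Ioo (0:ℝ) 1, g y := by
      rw [setIntegral_pos_iff_support_of_nonneg_ae hgnn hgi]
      have hU : IsOpen (g ⁻¹' Ioi 0) := isOpen_Ioi.preimage hgc
      have hsub : g ⁻¹' Ioi 0 ∩ Ioo (0:ℝ) 1 ⊆ Function.support g ∩ Ioo (0:ℝ) 1 := by
        intro z hz
        exact ⟨ne_of_gt hz.1, hz.2⟩
      have hy0mem : y0 ∈ g ⁻¹' Ioi 0 ∩ Ioo (0:ℝ) 1 := by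
        refine ⟨?_, hy0⟩
        have := hηlt y0 hy0 x x' hlt
        simp only [mem_preimage, mem_Ioi, hg]
        linarith
      have := (hU.inter isOpen_Ioo).measure_pos volume ⟨y0, hy0mem⟩
      exact lt_of_lt_of_le this (measure_mono hsub)
    have hsubint : ∫ y in Ioo (0:ℝ) 1, g y =
        (∫ y in Ioo (0:ℝ) 1, η y x') - ∫ y in Ioo (0:ℝ) 1, η y x :=
      integral_sub hix' hix
    rw [hm x, hm x']
    linarith
  refine ⟨⟨fun ha => ⟨m, fun y hy x x' h => part2 ha y hy x x' h⟩, ?_⟩, part2⟩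
  rintro ⟨s, hs⟩ y hy y' hy' hyy' x x' hxx'
  by_contra hcon
  push_neg at hcon
  have h1 := hs y hy x x' hxx'
  have h2 := hs y' hy' x' x hcon
  linarith
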